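/- arXiv:0911.5688 — 2 statements merged into one kernel-verified Lean document; each statement's English description precedes it below -/
import Mathlib

section
/- Let ν₁ and ν₂ be (possibly infinite) Borel measures on ℝ^d ∖ {0} with finite p-th moment that admit decompositions ν_i = Σ_{n=1}^∞ ν_i^n into probability measures ν_i^n supported in the closed shells {x : ε_n^i ≤ |x| ≤ ε_{n−1}^i} for decreasing sequences ε_n^i → 0 (with ε_0^i = ∞). Then ν = Σ_{n=1}^∞ ν₁^n ⊗ ν₂^n is a coupling of ν₁ and ν₂ (i.e. it has marginals ν₁ and ν₂) and satisfies ∫ |y₁ − y₂|^p ν(dy₁ dy₂) < ∞. In particular, the extended Wasserstein distance W_p(ν₁, ν₂) is finite. -/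
open MeasureTheory ENNReal Filter

noncomputable section

/-- The extended `p`-th Wasserstein distance between two (possibly infinite) measures,
defined as the infimum over all couplings (measures on the product with the given
marginals) of the `p`-th root of the transport cost. -/
def wassersteinP {α : Type*} [MeasurableSpace α] [PseudoEMetricSpace α]
    (p : ℝ) (μ ν : Measure α) : ℝ≥0∞ :=
  ⨅ π ∈ {π : Measure (α × α) | π.map Prod.fst = μ ∧ π.map Prod.snd = ν},
    (∫⁻ y, edist y.1 y.2 ^ p ∂π) ^ (1 / p)

/-- Elementary bound `(a + b) ^ p ≤ 2 ^ p * (a ^ p + b ^ p)` in `ℝ≥0∞` for `0 ≤ p`. -/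
lemma ennreal_add_rpow_le (a b : ℝ≥0∞) {p : ℝ} (hp : 0 ≤ p) :
    (a + b) ^ p ≤ 2 ^ p * (a ^ p + b ^ p) := by
  have h1 : a + b ≤ 2 * max a b := by
    rw [two_mul]
    exact add_le_add (le_max_left _ _) (le_max_right _ _)
  calc (a + b) ^ p ≤ (2 * max a b) ^ p := ENNReal.rpow_le_rpow h1 hp
    _ = 2 ^ p * (max a b) ^ p := ENNReal.mul_rpow_of_nonneg _ _ hp
    _ ≤ 2 ^ p * (a ^ p + b ^ p) := by
        gcongr
        rcases max_cases a b with ⟨h, _⟩ | ⟨h, _⟩ <;> rw [h]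
        · exact le_self_add
        · exact le_add_self

/-- if the (possibly infinite) measures `ν₁ = Σ ν₁ⁿ` and `ν₂ = Σ ν₂ⁿ` with
finite `p`-th moments decompose into probability measures supported on closed shells
`{ε_{n+1} ≤ ‖x‖ ≤ ε_n}` for decreasing null sequences of radii (with `ε₀ = ∞`), then
`ν = Σ ν₁ⁿ ⊗ ν₂ⁿ` is a coupling of `ν₁` and `ν₂` with finite transport cost
`∫ |y₁ − y₂|^p ν(dy₁ dy₂) < ∞`; in particular `W_p(ν₁, ν₂) < ∞`. -/
theorem shell_coupling_finite_cost
    {d : ℕ} (p : ℝ) (hp : 1 ≤ p)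
    (ν1 ν2 : ℕ → Measure (EuclideanSpace ℝ (Fin d)))
    (ε1 ε2 : ℕ → ℝ≥0∞)
    (hε10 : ε1 0 = ⊤) (hε20 : ε2 0 = ⊤)
    (hε1anti : StrictAnti ε1) (hε2anti : StrictAnti ε2)
    (hε1lim : Tendsto ε1 atTop (nhds 0)) (hε2lim : Tendsto ε2 atTop (nhds 0))
    (hprob1 : ∀ n, IsProbabilityMeasure (ν1 n))
    (hprob2 : ∀ n, IsProbabilityMeasure (ν2 n))
    (hsupp1 : ∀ n, ν1 n {x | ε1 (n + 1) ≤ (‖x‖₊ : ℝ≥0∞) ∧ (‖x‖₊ : ℝ≥0∞) ≤ ε1 n}ᶜ = 0)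
    (hsupp2 : ∀ n, ν2 n {x | ε2 (n + 1) ≤ (‖x‖₊ : ℝ≥0∞) ∧ (‖x‖₊ : ℝ≥0∞) ≤ ε2 n}ᶜ = 0)
    (hzero1 : Measure.sum ν1 {0} = 0) (hzero2 : Measure.sum ν2 {0} = 0)
    (hmom1 : ∫⁻ y, (‖y‖₊ : ℝ≥0∞) ^ p ∂(Measure.sum ν1) < ⊤)
    (hmom2 : ∫⁻ y, (‖y‖₊ : ℝ≥0∞) ^ p ∂(Measure.sum ν2) < ⊤) :
    (Measure.sum fun n => (ν1 n).prod (ν2 n)).map Prod.fst = Measure.sum ν1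
    ∧ (Measure.sum fun n => (ν1 n).prod (ν2 n)).map Prod.snd = Measure.sum ν2
    ∧ (∫⁻ y, edist y.1 y.2 ^ p ∂(Measure.sum fun n => (ν1 n).prod (ν2 n))) < ⊤
    ∧ wassersteinP p (Measure.sum ν1) (Measure.sum ν2) < ⊤ := by
  have hp0 : (0 : ℝ) ≤ p := le_trans zero_le_one hp
  haveI : ∀ n, IsProbabilityMeasure (ν1 n) := hprob1
  haveI : ∀ n, IsProbabilityMeasure (ν2 n) := hprob2
  -- marginals
  have hfst : (Measure.sum fun n => (ν1 n).prod (ν2 n)).map Prod.fst = Measure.sum ν1 := by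
    rw [Measure.map_sum measurable_fst.aemeasurable]
    congr 1
    funext n
    simp [Measure.map_fst_prod]
  have hsnd : (Measure.sum fun n => (ν1 n).prod (ν2 n)).map Prod.snd = Measure.sum ν2 := by
    rw [Measure.map_sum measurable_snd.aemeasurable]
    congr 1
    funext n
    simp [Measure.map_snd_prod]
  -- measurable moment functions
  have hmf : Measurable fun x : EuclideanSpace ℝ (Fin d) => (‖x‖₊ : ℝ≥0∞) ^ p :=
    ENNReal.continuous_rpow_const.measurable.comp measurable_nnnorm.coe_nnreal_ennreal
  -- cost bound
  have hcost : (∫⁻ y, edist y.1 y.2 ^ p ∂(Measure.sum fun n => (ν1 n).prod (ν2 n))) < ⊤ := by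
    rw [lintegral_sum_measure]
    have hbound : ∀ n, (∫⁻ y, edist y.1 y.2 ^ p ∂((ν1 n).prod (ν2 n)))
        ≤ 2 ^ p * ((∫⁻ x, (‖x‖₊ : ℝ≥0∞) ^ p ∂(ν1 n)) + ∫⁻ x, (‖x‖₊ : ℝ≥0∞) ^ p ∂(ν2 n)) := by
      intro n
      have step1 : (∫⁻ y, edist y.1 y.2 ^ p ∂((ν1 n).prod (ν2 n)))
          ≤ ∫⁻ y : _ × _, 2 ^ p * ((‖y.1‖₊ : ℝ≥0∞) ^ p + (‖y.2‖₊ : ℝ≥0∞) ^ p)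
              ∂((ν1 n).prod (ν2 n)) := by
        apply lintegral_mono
        intro y
        have hd : edist y.1 y.2 ≤ (‖y.1‖₊ : ℝ≥0∞) + (‖y.2‖₊ : ℝ≥0∞) := by
          calc edist y.1 y.2 ≤ edist y.1 0 + edist 0 y.2 := edist_triangle _ _ _
            _ = (‖y.1‖₊ : ℝ≥0∞) + (‖y.2‖₊ : ℝ≥0∞) := by
                rw [edist_zero_right, edist_zero_left, enorm_eq_nnnorm]
        calc edist y.1 y.2 ^ p ≤ ((‖y.1‖₊ : ℝ≥0∞) + (‖y.2‖₊ : ℝ≥0∞)) ^ p :=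
              ENNReal.rpow_le_rpow hd hp0
          _ ≤ 2 ^ p * ((‖y.1‖₊ : ℝ≥0∞) ^ p + (‖y.2‖₊ : ℝ≥0∞) ^ p) :=
              ennreal_add_rpow_le _ _ hp0
      have step2 : (∫⁻ y : _ × _, 2 ^ p * ((‖y.1‖₊ : ℝ≥0∞) ^ p + (‖y.2‖₊ : ℝ≥0∞) ^ p)
            ∂((ν1 n).prod (ν2 n)))
          = 2 ^ p * ((∫⁻ x, (‖x‖₊ : ℝ≥0∞) ^ p ∂(ν1 n)) + ∫⁻ x, (‖x‖₊ : ℝ≥0∞) ^ p ∂(ν2 n)) := by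
        have m1 : Measurable fun y : EuclideanSpace ℝ (Fin d) × EuclideanSpace ℝ (Fin d) =>
            (‖y.1‖₊ : ℝ≥0∞) ^ p := hmf.comp measurable_fst
        have m2 : Measurable fun y : EuclideanSpace ℝ (Fin d) × EuclideanSpace ℝ (Fin d) =>
            (‖y.2‖₊ : ℝ≥0∞) ^ p := hmf.comp measurable_snd
        rw [lintegral_const_mul (f := fun y : EuclideanSpace ℝ (Fin d) × EuclideanSpace ℝ (Fin d) => (‖y.1‖₊ : ℝ≥0∞) ^ p + (‖y.2‖₊ : ℝ≥0∞) ^ p) _ (m1.add m2), lintegral_add_left m1]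
        congr 2
        · rw [← lintegral_map hmf measurable_fst, Measure.map_fst_prod, measure_univ, one_smul]
        · rw [← lintegral_map hmf measurable_snd, Measure.map_snd_prod, measure_univ, one_smul]
      exact step1.trans_eq step2
    calc (∑' n, ∫⁻ y, edist y.1 y.2 ^ p ∂((ν1 n).prod (ν2 n)))
        ≤ ∑' n, 2 ^ p * ((∫⁻ x, (‖x‖₊ : ℝ≥0∞) ^ p ∂(ν1 n))
            + ∫⁻ x, (‖x‖₊ : ℝ≥0∞) ^ p ∂(ν2 n)) := ENNReal.tsum_le_tsum hbound
      _ = 2 ^ p * ((∑' n, ∫⁻ x, (‖x‖₊ : ℝ≥0∞) ^ p ∂(ν1 n))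
            + ∑' n, ∫⁻ x, (‖x‖₊ : ℝ≥0∞) ^ p ∂(ν2 n)) := by
          rw [ENNReal.tsum_mul_left, ENNReal.tsum_add]
      _ = 2 ^ p * ((∫⁻ y, (‖y‖₊ : ℝ≥0∞) ^ p ∂(Measure.sum ν1))
            + ∫⁻ y, (‖y‖₊ : ℝ≥0∞) ^ p ∂(Measure.sum ν2)) := by
          rw [lintegral_sum_measure, lintegral_sum_measure]
      _ < ⊤ := by
          apply ENNReal.mul_lt_top
          · exact ENNReal.rpow_lt_top_of_nonneg hp0 (by norm_num)
          · exact ENNReal.add_lt_top.2 ⟨hmom1, hmom2⟩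
  refine ⟨hfst, hsnd, hcost, ?_⟩
  have hle : wassersteinP p (Measure.sum ν1) (Measure.sum ν2)
      ≤ (∫⁻ y, edist y.1 y.2 ^ p ∂(Measure.sum fun n => (ν1 n).prod (ν2 n))) ^ (1 / p) :=
    iInf₂_le (Measure.sum fun n => (ν1 n).prod (ν2 n)) ⟨hfst, hsnd⟩
  exact hle.trans_lt (ENNReal.rpow_lt_top_of_nonneg (by positivity) hcost.ne)
end
end

section
/- Let Y_t(x) be a family of Lévy processes parametrized by x ∈ ℝ^d with generators L[x]f = ½(G(x)∇,∇)f + (b(x),∇f) + ∫(f(·+y) − f − (∇f, y))ν(x;dy), with G, b ∈ C¹ and ν differentiable in the coupling sense (D^jν_x well-defined). Then the characteristic exponent of the pair (h^{−1}(Y_t(x+he_j) − Y_t(x)), Y_t(x)), namely η^{j,h}_x(q,p) = −½[√G(x+he_j) q/h + √G(x)(p − q/h)]² + i(b(x+he_j), q/h) + i(b(x), p − q/h) + ∫(e^{i y₁ q/h + i y₂(p − q/h)} − 1 − i(y₁−y₂)q/h − i p y₂) ν_{x+he_j,x}(dy₁dy₂), converges as h → 0 to η^j_x(q,p) = −½[∇_j√G(x)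 q + √G(x) p]² + i(∇_j b(x), q) + i(b(x), p) + ∫(e^{iqz+ipy} − 1 − ipy − iqz) D^jν_x(dz dy). Consequently the coupled pair converges weakly to a Lévy-distributed limit (∇_j Y_t(x), Y_t(x)). -/
open MeasureTheory Complex Filter Topology

noncomputable section

abbrev Euc (d : ℕ) := EuclideanSpace ℝ (Fin d)

/-- The characteristic exponent `η^{j,h}_x(q,p)` of the coupled pair
`(h⁻¹(Y_t(x+he_j) − Y_t(x)), Y_t(x))`:
`η^{j,h}(q,p) = −½‖√G(x+he_j) q/h + √G(x)(p − q/h)‖² + i⟨b(x+he_j), q/h⟩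
 + i⟨b(x), p − q/h⟩ + ∫ (e^{i⟨y₁,q/h⟩ + i⟨y₂, p−q/h⟩} − 1 − i⟨y₁−y₂, q/h⟩ − i⟨y₂,p⟩)
   ν_{x+he_j, x}(dy₁dy₂)`,
where `A = √G` and `νc z` denotes the chosen coupling `ν_{z,x}` of `ν(z;·)`, `ν(x;·)`. -/
def etaH {d : ℕ} (A : Euc d → (Euc d →L[ℝ] Euc d)) (b : Euc d → Euc d)
    (νc : Euc d → Measure (Euc d × Euc d)) (x : Euc d) (j : Fin d)
    (h : ℝ) (q p : Euc d) : ℂ :=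
  -(1 / 2 : ℂ) * ((‖A (x + h • EuclideanSpace.single j (1 : ℝ)) (h⁻¹ • q)
        + A x (p - h⁻¹ • q)‖ ^ 2 : ℝ) : ℂ)
    + Complex.I * ((inner ℝ (b (x + h • EuclideanSpace.single j (1 : ℝ))) (h⁻¹ • q) : ℝ) : ℂ)
    + Complex.I * ((inner ℝ (b x) (p - h⁻¹ • q) : ℝ) : ℂ)
    + ∫ y, (Complex.exp (Complex.I *
          (((inner ℝ y.1 (h⁻¹ • q) : ℝ) + (inner ℝ y.2 (p - h⁻¹ • q) : ℝ) : ℝ) : ℂ))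
        - 1 - Complex.I * ((inner ℝ (y.1 - y.2) (h⁻¹ • q) : ℝ) : ℂ)
        - Complex.I * ((inner ℝ y.2 p : ℝ) : ℂ))
        ∂(νc (x + h • EuclideanSpace.single j (1 : ℝ)))

/-- The limiting characteristic exponent
`η^j_x(q,p) = −½‖∇_j√G(x) q + √G(x) p‖² + i⟨∇_j b(x), q⟩ + i⟨b(x), p⟩
 + ∫ (e^{i⟨z,q⟩+i⟨y,p⟩} − 1 − i⟨y,p⟩ − i⟨z,q⟩) D^jν_x(dz dy)`,
with `A' = ∇_j√G(x)`, `b' = ∇_j b(x)` and `Dν = D^jν_x`. -/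
def etaLim {d : ℕ} (A : Euc d → (Euc d →L[ℝ] Euc d)) (b : Euc d → Euc d)
    (A' : Euc d →L[ℝ] Euc d) (b' : Euc d) (Dν : Measure (Euc d × Euc d))
    (x : Euc d) (q p : Euc d) : ℂ :=
  -(1 / 2 : ℂ) * ((‖A' q + A x p‖ ^ 2 : ℝ) : ℂ)
    + Complex.I * ((inner ℝ b' q : ℝ) : ℂ) + Complex.I * ((inner ℝ (b x) p : ℝ) : ℂ)
    + ∫ w, (Complex.exp (Complex.I * (((inner ℝ w.1 q : ℝ) + (inner ℝ w.2 p : ℝ) : ℝ) : ℂ))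
        - 1 - Complex.I * ((inner ℝ w.2 p : ℝ) : ℂ)
        - Complex.I * ((inner ℝ w.1 q : ℝ) : ℂ)) ∂Dν


/-- Quadratic bound on the characteristic-exponent integrand:
`‖e^{iθ} − 1 − iθ‖ ≤ 3 θ²`. -/
theorem levy_key_bound (θ : ℝ) :
    ‖Complex.exp (Complex.I * θ) - 1 - Complex.I * θ‖ ≤ 3 * θ ^ 2 := by
  rcases le_or_gt |θ| 1 with hθ | hθ
  · have h1 : ‖Complex.I * (θ:ℂ)‖ ≤ 1 := by
      simpa [Complex.norm_real] using hθ
    have h := Complex.norm_exp_sub_one_sub_id_le h1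
    have h2 : ‖Complex.I * (θ:ℂ)‖ ^ 2 = θ ^ 2 := by
      simp [Complex.norm_real, _root_.sq_abs]
    rw [h2] at h
    calc ‖Complex.exp (Complex.I * θ) - 1 - Complex.I * θ‖ ≤ θ ^ 2 := h
      _ ≤ 3 * θ ^ 2 := by nlinarith [sq_nonneg θ]
  · have h3 : ‖Complex.exp (Complex.I * θ)‖ = 1 := by
      rw [mul_comm]; exact Complex.norm_exp_ofReal_mul_I θ
    have h4 : ‖Complex.I * (θ:ℂ)‖ = |θ| := by simp [Complex.norm_real]
    have h7 : ‖Complex.exp (Complex.I * θ) - 1 - Complex.I * θ‖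
        ≤ ‖Complex.exp (Complex.I * θ)‖ + ‖(1:ℂ)‖ + ‖Complex.I * (θ:ℂ)‖ := by
      calc _ ≤ ‖Complex.exp (Complex.I * θ) - 1‖ + ‖Complex.I * (θ:ℂ)‖ := norm_sub_le _ _
        _ ≤ _ := by gcongr; exact norm_sub_le _ _
    rw [h3, h4, norm_one] at h7
    have h5 : (1:ℝ) ≤ θ ^ 2 := by nlinarith [abs_nonneg θ, _root_.sq_abs θ]
    have h6 : |θ| ≤ θ ^ 2 := by nlinarith [_root_.sq_abs θ, abs_nonneg θ]
    linarith

/-- Directional difference quotients of a `C¹` family converge along `h → 0⁺`. -/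
theorem levy_slope_tendsto {E : Type*} [NormedAddCommGroup E] [NormedSpace ℝ E]
    (F : ℝ → E) (F' : E) (hF : HasDerivAt F F' 0) :
    Filter.Tendsto (fun h : ℝ => h⁻¹ • (F h - F 0))
      (nhdsWithin 0 (Set.Ioi 0)) (nhds F') := by
  have h1 := hasDerivAt_iff_tendsto_slope.mp hF
  have h2 : Filter.Tendsto (slope F 0) (nhdsWithin 0 (Set.Ioi 0)) (nhds F') :=
    h1.mono_left (nhdsWithin_mono _ (fun y hy => ne_of_gt hy))
  refine h2.congr fun h => ?_
  simp [slope, vsub_eq_sub]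

/-- if `√G` and `b` are differentiable at `x` in the direction `e_j` and
the Lévy measure family is differentiable in the coupling sense (the pushforwards of
`ν_{x+he_j,x}` under `(y₁,y₂) ↦ ((y₁−y₂)/h, y₂)` converge weakly, against continuous
test functions of quadratic growth, to `D^jν_x`), then the characteristic exponents
`η^{j,h}_x(q,p)` of the pairs `(h⁻¹(Y_t(x+he_j) − Y_t(x)), Y_t(x))` converge as
`h → 0+` to `η^j_x(q,p)`, and consequently the characteristic functions
`e^{t η^{j,h}}` converge to `e^{t η^j}` — so the coupled pair converges weakly to a
Lévy-distributed limit `(∇_j Y_t(x), Y_t(x))`. -/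
theorem levy_derivative_exponent
    {d : ℕ} (j : Fin d)
    (A : Euc d → (Euc d →L[ℝ] Euc d)) (b : Euc d → Euc d) (x : Euc d)
    (A' : Euc d →L[ℝ] Euc d) (b' : Euc d)
    (hA : HasDerivAt (fun h : ℝ => A (x + h • EuclideanSpace.single j (1 : ℝ))) A' 0)
    (hb : HasDerivAt (fun h : ℝ => b (x + h • EuclideanSpace.single j (1 : ℝ))) b' 0)
    (νc : Euc d → Measure (Euc d × Euc d)) (Dν : Measure (Euc d × Euc d))
    (hweak : ∀ g : Euc d × Euc d → ℂ, Continuous g →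
      (∃ C : ℝ, ∀ w : Euc d × Euc d, ‖g w‖ ≤ C * (‖w.1‖ ^ 2 + ‖w.2‖ ^ 2)) →
      Tendsto (fun h : ℝ =>
          ∫ y, g (h⁻¹ • (y.1 - y.2), y.2)
            ∂(νc (x + h • EuclideanSpace.single j (1 : ℝ))))
        (nhdsWithin 0 (Set.Ioi 0)) (nhds (∫ w, g w ∂Dν))) :
    ∀ q p : Euc d,
      Tendsto (fun h : ℝ => etaH A b νc x j h q p) (nhdsWithin 0 (Set.Ioi 0))
        (nhds (etaLim A b A' b' Dν x q p))
      ∧ ∀ t : ℝ, 0 ≤ t →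
          Tendsto (fun h : ℝ => Complex.exp ((t : ℂ) * etaH A b νc x j h q p))
            (nhdsWithin 0 (Set.Ioi 0))
            (nhds (Complex.exp ((t : ℂ) * etaLim A b A' b' Dν x q p))) := by
  intro q p
  classical
  set e : Euc d := EuclideanSpace.single j (1 : ℝ) with he
  set g : Euc d × Euc d → ℂ := fun w =>
    Complex.exp (Complex.I * (((inner ℝ w.1 q : ℝ) + (inner ℝ w.2 p : ℝ) : ℝ) : ℂ))
      - 1 - Complex.I * ((inner ℝ w.2 p : ℝ) : ℂ)
      - Complex.I * ((inner ℝ w.1 q : ℝ) : ℂ) with hg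
  -- continuity of g
  have c1 : Continuous fun w : Euc d × Euc d => (inner ℝ w.1 q : ℝ) :=
    continuous_fst.inner continuous_const
  have c2 : Continuous fun w : Euc d × Euc d => (inner ℝ w.2 p : ℝ) :=
    continuous_snd.inner continuous_const
  have hg_cont : Continuous g :=
    (((Complex.continuous_exp.comp (continuous_const.mul
      (Complex.continuous_ofReal.comp (c1.add c2)))).sub continuous_const).sub
      (continuous_const.mul (Complex.continuous_ofReal.comp c2))).sub
      (continuous_const.mul (Complex.continuous_ofReal.comp c1))
  -- quadratic growth bound on g
  have hg_bound : ∃ C : ℝ, ∀ w : Euc d × Euc d, ‖g w‖ ≤ C * (‖w.1‖ ^ 2 + ‖w.2‖ ^ 2) := by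
    refine ⟨6 * (‖q‖ ^ 2 + ‖p‖ ^ 2), fun w => ?_⟩
    have hθeq : g w = Complex.exp (Complex.I *
          (((inner ℝ w.1 q : ℝ) + (inner ℝ w.2 p : ℝ) : ℝ) : ℂ)) - 1
        - Complex.I * (((inner ℝ w.1 q : ℝ) + (inner ℝ w.2 p : ℝ) : ℝ) : ℂ) := by
      simp only [hg]; push_cast; ring
    rw [hθeq]
    have h1 := levy_key_bound ((inner ℝ w.1 q : ℝ) + (inner ℝ w.2 p : ℝ))
    have ha : |(inner ℝ w.1 q : ℝ)| ≤ ‖w.1‖ * ‖q‖ := abs_real_inner_le_norm _ _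
    have hb2 : |(inner ℝ w.2 p : ℝ)| ≤ ‖w.2‖ * ‖p‖ := abs_real_inner_le_norm _ _
    have h2 : ((inner ℝ w.1 q : ℝ) + (inner ℝ w.2 p : ℝ)) ^ 2
        ≤ 2 * (‖w.1‖ ^ 2 * ‖q‖ ^ 2 + ‖w.2‖ ^ 2 * ‖p‖ ^ 2) := by
      nlinarith [sq_nonneg ((inner ℝ w.1 q : ℝ) - (inner ℝ w.2 p : ℝ)),
        sq_nonneg ((inner ℝ w.1 q : ℝ) + (inner ℝ w.2 p : ℝ)),
        abs_nonneg (inner ℝ w.1 q : ℝ), abs_nonneg (inner ℝ w.2 p : ℝ),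
        _root_.sq_abs (inner ℝ w.1 q : ℝ), _root_.sq_abs (inner ℝ w.2 p : ℝ),
        norm_nonneg w.1, norm_nonneg w.2, norm_nonneg q, norm_nonneg p,
        mul_nonneg (norm_nonneg w.1) (norm_nonneg q),
        mul_nonneg (norm_nonneg w.2) (norm_nonneg p)]
    have h3 : 2 * (‖w.1‖ ^ 2 * ‖q‖ ^ 2 + ‖w.2‖ ^ 2 * ‖p‖ ^ 2)
        ≤ 2 * ((‖q‖ ^ 2 + ‖p‖ ^ 2) * (‖w.1‖ ^ 2 + ‖w.2‖ ^ 2)) := by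
      nlinarith [sq_nonneg ‖w.1‖, sq_nonneg ‖w.2‖, sq_nonneg ‖q‖, sq_nonneg ‖p‖]
    calc ‖_ - 1 - Complex.I * _‖
        ≤ 3 * ((inner ℝ w.1 q : ℝ) + (inner ℝ w.2 p : ℝ)) ^ 2 := h1
      _ ≤ 6 * (‖q‖ ^ 2 + ‖p‖ ^ 2) * (‖w.1‖ ^ 2 + ‖w.2‖ ^ 2) := by nlinarith
      _ = 6 * (‖q‖ ^ 2 + ‖p‖ ^ 2) * (‖w.1‖ ^ 2 + ‖w.2‖ ^ 2) := rfl
  have hInt := hweak g hg_cont hg_bound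
  -- derivative limits
  have hAq : HasDerivAt (fun h : ℝ => A (x + h • e) q) (A' q) 0 := by
    simpa using hA.clm_apply (hasDerivAt_const (0:ℝ) q)
  have hA0 : A (x + (0:ℝ) • e) q = A x q := by simp
  have hAs : Tendsto (fun h : ℝ => h⁻¹ • (A (x + h • e) q - A x q))
      (nhdsWithin 0 (Set.Ioi 0)) (nhds (A' q)) := by
    have := levy_slope_tendsto (fun h : ℝ => A (x + h • e) q) (A' q) hAq
    simpa [hA0] using this
  have hb0 : b (x + (0:ℝ) • e) = b x := by simp
  have hbs : Tendsto (fun h : ℝ => h⁻¹ • (b (x + h • e) - b x))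
      (nhdsWithin 0 (Set.Ioi 0)) (nhds b') := by
    have := levy_slope_tendsto (fun h : ℝ => b (x + h • e)) b' hb
    simpa [hb0] using this
  -- the rewritten form of etaH
  set F : ℝ → ℂ := fun h =>
    -(1 / 2 : ℂ) * ((‖h⁻¹ • (A (x + h • e) q - A x q) + A x p‖ ^ 2 : ℝ) : ℂ)
      + Complex.I * ((inner ℝ (h⁻¹ • (b (x + h • e) - b x)) q : ℝ) : ℂ)
      + Complex.I * ((inner ℝ (b x) p : ℝ) : ℂ)
      + ∫ y, g (h⁻¹ • (y.1 - y.2), y.2) ∂(νc (x + h • e)) with hF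
  have heq : ∀ h ∈ Set.Ioi (0:ℝ), F h = etaH A b νc x j h q p := by
    intro h hh
    simp only [hF, etaH, ← he]
    have t1 : A (x + h • e) (h⁻¹ • q) + A x (p - h⁻¹ • q)
        = h⁻¹ • (A (x + h • e) q - A x q) + A x p := by
      simp only [_root_.map_smul, _root_.map_sub, smul_sub]
      abel
    have t23 : Complex.I * ((inner ℝ (b (x + h • e)) (h⁻¹ • q) : ℝ) : ℂ)
          + Complex.I * ((inner ℝ (b x) (p - h⁻¹ • q) : ℝ) : ℂ)
        = Complex.I * ((inner ℝ (h⁻¹ • (b (x + h • e) - b x)) q : ℝ) : ℂ)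
          + Complex.I * ((inner ℝ (b x) p : ℝ) : ℂ) := by
      simp only [real_inner_smul_right, real_inner_smul_left, inner_sub_right,
        inner_sub_left]
      push_cast
      ring
    have t4 : (fun y : Euc d × Euc d => g (h⁻¹ • (y.1 - y.2), y.2))
        = fun y : Euc d × Euc d => (Complex.exp (Complex.I *
            (((inner ℝ y.1 (h⁻¹ • q) : ℝ) + (inner ℝ y.2 (p - h⁻¹ • q) : ℝ) : ℝ) : ℂ))
          - 1 - Complex.I * ((inner ℝ (y.1 - y.2) (h⁻¹ • q) : ℝ) : ℂ)
          - Complex.I * ((inner ℝ y.2 p : ℝ) : ℂ)) := by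
      funext y
      have e1 : ((inner ℝ y.1 (h⁻¹ • q) : ℝ) + (inner ℝ y.2 (p - h⁻¹ • q) : ℝ))
          = ((inner ℝ (h⁻¹ • (y.1 - y.2) : Euc d) q : ℝ) + (inner ℝ y.2 p : ℝ)) := by
        simp only [real_inner_smul_right, real_inner_smul_left, inner_sub_right,
          inner_sub_left]
        ring
      have e2 : (inner ℝ (y.1 - y.2) (h⁻¹ • q) : ℝ)
          = (inner ℝ (h⁻¹ • (y.1 - y.2) : Euc d) q : ℝ) := by
        simp only [real_inner_smul_right, real_inner_smul_left]
      simp only [hg, e1, e2]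
      ring
    rw [t1, t4]
    linear_combination (-1 : ℂ) * t23
  -- the limits of the four pieces
  have lim1 : Tendsto (fun h : ℝ =>
      -(1 / 2 : ℂ) * ((‖h⁻¹ • (A (x + h • e) q - A x q) + A x p‖ ^ 2 : ℝ) : ℂ))
      (nhdsWithin 0 (Set.Ioi 0))
      (nhds (-(1 / 2 : ℂ) * ((‖A' q + A x p‖ ^ 2 : ℝ) : ℂ))) := by
    have cont : Continuous fun u : Euc d => -(1 / 2 : ℂ) * ((‖u + A x p‖ ^ 2 : ℝ) : ℂ) :=
      continuous_const.mul (Complex.continuous_ofReal.comp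
        ((continuous_id.add continuous_const).norm.pow 2))
    exact (cont.tendsto (A' q)).comp hAs
  have lim2 : Tendsto (fun h : ℝ =>
      Complex.I * ((inner ℝ (h⁻¹ • (b (x + h • e) - b x)) q : ℝ) : ℂ))
      (nhdsWithin 0 (Set.Ioi 0)) (nhds (Complex.I * ((inner ℝ b' q : ℝ) : ℂ))) := by
    have cont : Continuous fun v : Euc d => Complex.I * ((inner ℝ v q : ℝ) : ℂ) :=
      continuous_const.mul (Complex.continuous_ofReal.comp
        (continuous_id.inner continuous_const))
    exact (cont.tendsto b').comp hbs
  have limF : Tendsto F (nhdsWithin 0 (Set.Ioi 0))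
      (nhds (etaLim A b A' b' Dν x q p)) := by
    rw [etaLim, hF]
    exact ((lim1.add lim2).add tendsto_const_nhds).add hInt
  have hmain : Tendsto (fun h : ℝ => etaH A b νc x j h q p) (nhdsWithin 0 (Set.Ioi 0))
      (nhds (etaLim A b A' b' Dν x q p)) := by
    refine limF.congr' ?_
    filter_upwards [self_mem_nhdsWithin] with h hh
    exact heq h hh
  refine ⟨hmain, fun t ht => ?_⟩
  exact (Complex.continuous_exp.tendsto _).comp (tendsto_const_nhds.mul hmain)
end
end
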